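/- Let n be a positive integer, δ ∈ {0, 1}, and β ∈ ℂ \ {0} with |β| ≥ ((1 + e²)^{(3−n)/2}/(√2 e)^{1−n}) (√2 + ω₀^δ). If p ∈ ℋ satisfies p(z) ≠ 0 on 𝔻 and (p(z))^δ + β z p′(z)/(p(z))^n ≺ √(1 + z) (principal branch), then p(z) ≺ 𝔅(z). -/

import Mathlib

open Complex

noncomputable section

/-- The open unit disk in the complex plane. -/
def unitDisk : Set ℂ := Metric.ball 0 1

/-- `f` is subordinate to `g` on the unit disk: there is an analytic Schwarz function `w`
with `w 0 = 0`, `|w z| < 1` on the disk, and `f = g ∘ w` on the disk. -/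
def Subord (f g : ℂ → ℂ) : Prop :=
  ∃ w : ℂ → ℂ, DifferentiableOn ℂ w unitDisk ∧ w 0 = 0 ∧
    (∀ z ∈ unitDisk, ‖w z‖ < 1) ∧ ∀ z ∈ unitDisk, f z = g (w z)

/-- The function `𝔅(z) = √(1 + tanh z)` (principal branch). -/
def bean (z : ℂ) : ℂ := (1 + Complex.tanh z) ^ ((1 : ℂ) / 2)

/-- `R₀ = e √(2/(e² - 1))`. -/
def R₀ : ℝ := Real.exp 1 * Real.sqrt (2 / (Real.exp 1 ^ 2 - 1))

/-- `ω₀ = max_{θ ∈ [0, 2π)} |𝔅(e^{iθ})|`. -/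
def ω₀ : ℝ :=
  sSup ((fun θ : ℝ => ‖bean (Complex.exp (θ * Complex.I))‖) '' Set.Ico 0 (2 * Real.pi))

/-! Write `q(z) = β z p'(z) / p(z)^n`; the subordination gives `|q| ≤ √2 + |p|^δ` on `𝔻`.
If `|p - 1| ≤ 1/5` on the disc of radius `r`, the maximum principle for `p'/p^n` on that disc
and the mean value inequality give `|p - 1| ≤ (√2 + (6/5)^δ) (6/5)^n / |β|`, which the bound
on `|β|` makes strictly smaller than `1/5`; a continuity argument in `r` then yields
`|p - 1| ≤ 1/5` on all of `𝔻`. Near `1` the map `v ↦ artanh (v² - 1)` is an analytic left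
inverse of `𝔅` with values in `𝔻`, and composed with `p` it is the Schwarz function. -/

open Metric Set Filter Topology

lemma cosh_ne_zero_of_norm_lt_pi_div_two {z : ℂ} (hz : ‖z‖ < Real.pi / 2) : cosh z ≠ 0 := by
  rw [← cos_mul_I]
  intro h
  obtain ⟨k, hk⟩ := cos_eq_zero_iff.1 h
  have hk1 : (1 : ℝ) ≤ |2 * (k : ℝ) + 1| := by
    have : (1 : ℤ) ≤ |2 * k + 1| := by rw [le_abs]; omega
    exact_mod_cast this
  have hnorm : ‖z * I‖ = |2 * (k : ℝ) + 1| * Real.pi / 2 := by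
    rw [hk, show (2 * (k : ℂ) + 1) * Real.pi / 2 = (((2 * k + 1) * Real.pi / 2 : ℝ) : ℂ) by
      push_cast; ring, Complex.norm_real, Real.norm_eq_abs, abs_div, abs_mul,
      abs_of_pos Real.pi_pos, abs_two]
  rw [norm_mul, Complex.norm_I, mul_one] at hnorm
  nlinarith [Real.pi_pos]

lemma norm_bean (z : ℂ) : ‖bean z‖ = √‖1 + tanh z‖ := by
  rw [bean, show (1 : ℂ) / 2 = ((1 / 2 : ℝ) : ℂ) by push_cast; ring, Complex.norm_cpow_real,
    Real.sqrt_eq_rpow]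

lemma continuous_norm_bean_exp_mul_I : Continuous fun θ : ℝ => ‖bean (exp (θ * I))‖ := by
  simp only [norm_bean]
  refine Real.continuous_sqrt.comp (continuous_norm.comp (continuous_const.add ?_))
  refine continuous_iff_continuousAt.2 fun θ => ?_
  have hcosh : cosh (exp (θ * I)) ≠ 0 := cosh_ne_zero_of_norm_lt_pi_div_two (by
    rw [Complex.norm_exp_ofReal_mul_I]; linarith [Real.pi_gt_three])
  have : ContinuousAt tanh (exp (θ * I)) := by
    have htanh : tanh = fun z => sinh z / cosh z := funext fun z => tanh_eq_sinh_div_cosh z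
    rw [htanh]
    exact continuous_sinh.continuousAt.div continuous_cosh.continuousAt hcosh
  exact this.comp (f := fun θ : ℝ => exp (θ * I)) (by fun_prop)

lemma six_fifths_le_ω₀ : (6 / 5 : ℝ) ≤ ω₀ := by
  have hbdd : BddAbove ((fun θ : ℝ => ‖bean (exp (θ * I))‖) '' Ico 0 (2 * Real.pi)) :=
    ((isCompact_Icc.image continuous_norm_bean_exp_mul_I).bddAbove).mono
      (image_mono Ico_subset_Icc_self)
  refine le_csSup_of_le hbdd (mem_image_of_mem _ ⟨le_rfl, by positivity⟩) ?_
  have htanh : (11 / 25 : ℝ) ≤ Real.tanh 1 := by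
    have he := Real.exp_one_gt_d9
    rw [Real.tanh_eq, Real.exp_neg, le_div_iff₀ (by positivity)]
    have : Real.exp 1 * (Real.exp 1)⁻¹ = 1 := mul_inv_cancel₀ (Real.exp_pos 1).ne'
    nlinarith [inv_pos.2 (Real.exp_pos 1)]
  simp only [Complex.ofReal_zero, zero_mul, Complex.exp_zero, norm_bean]
  rw [show (1 : ℂ) + tanh 1 = ((1 + Real.tanh 1 : ℝ) : ℂ) by push_cast; rfl, Complex.norm_real,
    Real.norm_of_nonneg (by linarith), Real.le_sqrt (by norm_num) (by linarith)]
  linarith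

lemma rpow_div_rpow_eq_mul_div_sqrt_rpow {a d : ℝ} (ha : 0 < a) (hd : 0 < d) (t : ℝ) :
    a ^ ((3 - t) / 2) / d ^ (1 - t) = a * (d / √a) ^ (t - 1) := by
  have hsa : 0 < √a := Real.sqrt_pos.2 ha
  rw [Real.rpow_def_of_pos ha, Real.rpow_def_of_pos hd, Real.rpow_def_of_pos (div_pos hd hsa),
    Real.log_div hd.ne' hsa.ne', Real.log_sqrt ha.le, ← Real.exp_sub]
  conv_rhs => arg 1; rw [← Real.exp_log ha]
  rw [← Real.exp_add]
  ring_nf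

lemma sqrt_two_add_mul_pow_lt_norm_div_five {n δ : ℕ} {β : ℂ} (hn : 0 < n)
    (hβ : (1 + Real.exp 1 ^ 2) ^ ((3 - (n : ℝ)) / 2) /
          (Real.sqrt 2 * Real.exp 1) ^ (1 - (n : ℝ)) *
        (Real.sqrt 2 + ω₀ ^ δ) ≤ ‖β‖) :
    (√2 + (6 / 5) ^ δ) * (6 / 5) ^ n < 1 / 5 * ‖β‖ := by
  -- `6/5` lies below both `√2 e / √(1 + e²) ≈ 1.33` and `ω₀ ≈ 1.44`, and `1 + e² > 6`.
  have he := Real.exp_one_gt_d9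
  have hA : 0 < 1 + Real.exp 1 ^ 2 := by positivity
  have hratio : (6 / 5 : ℝ) ≤ √2 * Real.exp 1 / √(1 + Real.exp 1 ^ 2) := by
    have hl : 6 / 5 * √(1 + Real.exp 1 ^ 2) = √((6 / 5) ^ 2 * (1 + Real.exp 1 ^ 2)) := by
      rw [Real.sqrt_mul (by positivity), Real.sqrt_sq (by norm_num)]
    have hr : √2 * Real.exp 1 = √(2 * Real.exp 1 ^ 2) := by
      rw [Real.sqrt_mul (by norm_num), Real.sqrt_sq (Real.exp_pos 1).le]
    rw [le_div_iff₀ (Real.sqrt_pos.2 hA), hl, hr]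
    exact Real.sqrt_le_sqrt (by nlinarith)
  rw [rpow_div_rpow_eq_mul_div_sqrt_rpow hA (by positivity), ← Nat.cast_pred hn,
    Real.rpow_natCast] at hβ
  have hlow : (1 + Real.exp 1 ^ 2) * (6 / 5) ^ (n - 1) * (√2 + (6 / 5) ^ δ) ≤ ‖β‖ := by
    refine le_trans ?_ hβ
    gcongr
    exact six_fifths_le_ω₀
  have hc : 0 < (6 / 5 : ℝ) ^ (n - 1) * (√2 + (6 / 5) ^ δ) := by positivity
  have hA6 : 6 < 1 + Real.exp 1 ^ 2 := by nlinarith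
  rw [← Nat.sub_add_cancel hn, pow_succ]
  nlinarith [mul_lt_mul_of_pos_right hA6 hc]

lemma norm_sub_le_of_norm_mul_deriv_div_pow_le {p : ℂ → ℂ} {s : Set ℂ} {r K L : ℝ} {n : ℕ}
    (hs : IsOpen s) (hp : DifferentiableOn ℂ p s) (hp0 : ∀ z ∈ s, p z ≠ 0)
    (hr : 0 < r) (hrs : closedBall 0 r ⊆ s) (hK : ∀ z ∈ closedBall 0 r, ‖p z‖ ≤ K)
    (hL : ∀ z ∈ sphere 0 r, ‖z * deriv p z / p z ^ n‖ ≤ L) :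
    ∀ z ∈ closedBall 0 r, ‖p z - p 0‖ ≤ L * K ^ n := by
  set h : ℂ → ℂ := fun z => deriv p z / p z ^ n
  have hh : DifferentiableOn ℂ h s :=
    (hp.analyticOnNhd hs).deriv.differentiableOn.div (hp.pow n)
      fun z hz => pow_ne_zero n (hp0 z hz)
  have hh_sphere : ∀ z ∈ frontier (ball (0 : ℂ) r), ‖h z‖ ≤ L / r := by
    intro z hz
    rw [frontier_ball 0 hr.ne'] at hz
    have hzr : ‖z‖ = r := by simpa using hz
    rw [le_div_iff₀ hr, ← hzr, ← norm_mul, mul_comm, ← mul_div_assoc]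
    exact hL z hz
  have hderiv : ∀ z ∈ closedBall (0 : ℂ) r, ‖deriv p z‖ ≤ L / r * K ^ n := by
    intro z hz
    have hhz : ‖h z‖ ≤ L / r :=
      Complex.norm_le_of_forall_mem_frontier_norm_le isBounded_ball
        ((hh.mono (by rwa [closure_ball 0 hr.ne'])).diffContOnCl) hh_sphere
        (by rwa [closure_ball 0 hr.ne'])
    have hpz : deriv p z = h z * p z ^ n := by
      simp only [h, div_mul_cancel₀ _ (pow_ne_zero n (hp0 z (hrs hz)))]
    rw [hpz, norm_mul, norm_pow]
    exact mul_le_mul hhz (pow_le_pow_left₀ (norm_nonneg _) (hK z hz) n) (by positivity)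
      ((norm_nonneg _).trans hhz)
  have hC : 0 ≤ L / r * K ^ n := (norm_nonneg _).trans (hderiv 0 (mem_closedBall_self hr.le))
  intro z hz
  have hzr : ‖z‖ ≤ r := by simpa using hz
  calc ‖p z - p 0‖ ≤ L / r * K ^ n * ‖z - 0‖ :=
        (convex_closedBall 0 r).norm_image_sub_le_of_norm_deriv_le
          (fun w hw => hp.differentiableAt (hs.mem_nhds (hrs hw))) hderiv
          (mem_closedBall_self hr.le) hz
    _ ≤ L / r * K ^ n * r := by rw [sub_zero]; exact mul_le_mul_of_nonneg_left hzr hC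
    _ = L * K ^ n := by field_simp

lemma Subord.norm_le {f g : ℂ → ℂ} (hfg : Subord f g) {C : ℝ}
    (hg : ∀ w ∈ unitDisk, ‖g w‖ ≤ C) : ∀ z ∈ unitDisk, ‖f z‖ ≤ C := by
  obtain ⟨w, -, -, hw, hfw⟩ := hfg
  intro z hz
  rw [hfw z hz]
  exact hg _ (by simpa [unitDisk] using hw z hz)

lemma subord_of_leftInvOn {f g φ : ℂ → ℂ} {V : Set ℂ} (hf : DifferentiableOn ℂ f unitDisk)
    (hfV : MapsTo f unitDisk V) (hφ : ∀ v ∈ V, DifferentiableAt ℂ φ v) (hφ0 : φ (f 0) = 0)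
    (hφV : ∀ v ∈ V, ‖φ v‖ < 1) (hgφ : LeftInvOn g φ V) : Subord f g :=
  ⟨φ ∘ f, fun z hz => (hφ _ (hfV hz)).comp_differentiableWithinAt z (hf z hz), hφ0,
    fun _ hz => hφV _ (hfV hz), fun _ hz => (hgφ (hfV hz)).symm⟩

lemma norm_one_add_cpow_half_le {w : ℂ} (hw : ‖w‖ ≤ 1) : ‖(1 + w) ^ ((1 : ℂ) / 2)‖ ≤ √2 := by
  rw [show (1 : ℂ) / 2 = ((1 / 2 : ℝ) : ℂ) by push_cast; ring, Complex.norm_cpow_real,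
    ← Real.sqrt_eq_rpow]
  exact Real.sqrt_le_sqrt ((norm_add_le _ _).trans (by rw [norm_one]; linarith))

lemma forall_mem_ball_le_of_closedBall_lt {E : Type*} [NormedAddCommGroup E] [NormedSpace ℝ E]
    [ProperSpace E] {f : E → ℝ} {x : E} {R ε : ℝ} (hf : ContinuousOn f (ball x R))
    (hstep : ∀ r ∈ Ico 0 R, (∀ z ∈ ball x r, f z ≤ ε) → ∀ z ∈ closedBall x r, f z < ε) :
    ∀ z ∈ ball x R, f z ≤ ε := by
  set S : Set ℝ := {r | ∀ z ∈ ball x r, f z ≤ ε}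
  have hS : IsClosed S := by
    have : S = ⋂ z, {r | r ≤ dist z x} ∪ {_r | f z ≤ ε} := by
      ext r; simp [S, imp_iff_not_or]
    rw [this]
    exact isClosed_iInter fun z => (isClosed_le continuous_id continuous_const).union isClosed_const
  have hopen : ∀ r ∈ S ∩ Ico 0 R, S ∈ 𝓝[>] r := by
    rintro r ⟨hrS, hr0, hrR⟩
    obtain ⟨η, hη, hsub⟩ := (isCompact_closedBall x r).exists_thickening_subset_open
      (hf.isOpen_inter_preimage isOpen_ball isOpen_Iio)
      fun z hz => ⟨closedBall_subset_ball hrR hz, hstep r ⟨hr0, hrR⟩ hrS z hz⟩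
    rw [thickening_closedBall hη hr0] at hsub
    refine mem_of_superset (Ioo_mem_nhdsGT (by linarith : r < r + η)) fun r' hr' z hz => ?_
    exact (hsub (ball_subset_ball (by linarith [hr'.2]) hz)).2.le
  intro z hz
  have hR : 0 ≤ R := dist_nonneg.trans (mem_ball.1 hz).le
  exact hS.inter isClosed_Icc |>.Icc_subset_of_forall_mem_nhdsWithin (by simp [S]) hopen
    (right_mem_Icc.2 hR) z hz

-- `artanh (v² - 1)`, written with two logarithms so that it is analytic near `v = 1`.
def beanInv (v : ℂ) : ℂ := (log (v ^ 2) - log (2 - v ^ 2)) / 2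

lemma tanh_eq_exp_two_mul (w : ℂ) (hw : exp (2 * w) + 1 ≠ 0) :
    tanh w = (exp (2 * w) - 1) / (exp (2 * w) + 1) := by
  have he : exp w ≠ 0 := exp_ne_zero w
  have hcosh : exp w + exp (-w) ≠ 0 := by
    rw [exp_neg]
    intro h
    apply hw
    rw [two_mul, exp_add]
    field_simp at h
    linear_combination h
  rw [tanh_eq_sinh_div_cosh, sinh, cosh, div_div_div_cancel_right₀ two_ne_zero,
    two_mul, exp_add]
  rw [exp_neg] at hcosh ⊢
  field_simp

lemma bean_beanInv {v : ℂ} (hv : 0 < v.re) (hv2 : v ^ 2 ≠ 2) : bean (beanInv v) = v := by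
  have hsq : v ^ 2 ≠ 0 := pow_ne_zero 2 (fun h => by simp [h] at hv)
  have hsub : 2 - v ^ 2 ≠ 0 := sub_ne_zero.2 (Ne.symm hv2)
  have hexp : exp (2 * beanInv v) = v ^ 2 / (2 - v ^ 2) := by
    rw [beanInv, mul_div_cancel₀ _ two_ne_zero, exp_sub, exp_log hsq, exp_log hsub]
  have hden : exp (2 * beanInv v) + 1 = 2 / (2 - v ^ 2) := by
    rw [hexp]; field_simp; ring
  have htanh : 1 + tanh (beanInv v) = v ^ 2 := by
    rw [tanh_eq_exp_two_mul _ (by rw [hden]; exact div_ne_zero two_ne_zero hsub), hden, hexp]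
    field_simp
    ring
  rw [bean, htanh, one_div]
  exact sq_cpow_two_inv hv

lemma differentiableAt_beanInv {v : ℂ} (hv : ‖v ^ 2 - 1‖ < 1) : DifferentiableAt ℂ beanInv v := by
  have h1 : v ^ 2 ∈ slitPlane := by
    simpa using mem_slitPlane_of_norm_lt_one hv
  have h2 : 2 - v ^ 2 ∈ slitPlane := by
    have := mem_slitPlane_of_norm_lt_one (z := 1 - v ^ 2) (by rwa [norm_sub_rev])
    rwa [show 1 + (1 - v ^ 2) = 2 - v ^ 2 by ring] at this
  unfold beanInv
  fun_prop (disch := assumption)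

lemma norm_beanInv_le {v : ℂ} (hv : ‖v ^ 2 - 1‖ ≤ 1 / 2) : ‖beanInv v‖ ≤ 3 / 2 * ‖v ^ 2 - 1‖ := by
  have h1 : ‖log (v ^ 2)‖ ≤ 3 / 2 * ‖v ^ 2 - 1‖ := by
    simpa using norm_log_one_add_half_le_self hv
  have h2 : ‖log (2 - v ^ 2)‖ ≤ 3 / 2 * ‖v ^ 2 - 1‖ := by
    have := norm_log_one_add_half_le_self (z := 1 - v ^ 2) (by rwa [norm_sub_rev])
    rwa [show 1 + (1 - v ^ 2) = 2 - v ^ 2 by ring, norm_sub_rev] at this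
  rw [beanInv, norm_div, Complex.norm_two]
  linarith [norm_sub_le (log (v ^ 2)) (log (2 - v ^ 2))]

lemma norm_sq_sub_one_le {v : ℂ} {ε : ℝ} (hv : ‖v - 1‖ ≤ ε) : ‖v ^ 2 - 1‖ ≤ ε * (2 + ε) := by
  have h : ‖v + 1‖ ≤ 2 + ε := by
    calc ‖v + 1‖ = ‖(v - 1) + 2‖ := by ring_nf
      _ ≤ ε + 2 := (norm_add_le _ _).trans (by rw [Complex.norm_two]; linarith)
      _ = 2 + ε := add_comm _ _
  rw [show v ^ 2 - 1 = (v - 1) * (v + 1) by ring, norm_mul]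
  exact mul_le_mul hv h (norm_nonneg _) ((norm_nonneg _).trans hv)

lemma subord_bean_of_norm_sub_one_le {p : ℂ → ℂ} (hp : DifferentiableOn ℂ p unitDisk)
    (hp0 : p 0 = 1) (hnear : ∀ z ∈ unitDisk, ‖p z - 1‖ ≤ 1 / 5) : Subord p bean := by
  have hsq : ∀ v ∈ closedBall (1 : ℂ) (1 / 5), ‖v ^ 2 - 1‖ ≤ 11 / 25 := fun v hv =>
    (norm_sq_sub_one_le (mem_closedBall_iff_norm.1 hv)).trans_eq (by norm_num)
  refine subord_of_leftInvOn hp (fun z hz => mem_closedBall_iff_norm.2 (hnear z hz))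
    (fun v hv => differentiableAt_beanInv ((hsq v hv).trans_lt (by norm_num)))
    (by norm_num [hp0, beanInv]) (fun v hv => ?_) fun v hv => bean_beanInv ?_ ?_
  · linarith [norm_beanInv_le ((hsq v hv).trans (by norm_num)), hsq v hv]
  · have := (Complex.abs_re_le_norm (v - 1)).trans (mem_closedBall_iff_norm.1 hv)
    rw [Complex.sub_re, Complex.one_re, abs_le] at this
    linarith
  · intro h
    have := hsq v hv
    rw [h] at this
    norm_num at this

lemma norm_sub_one_lt_of_forall_ball {p : ℂ → ℂ} {β : ℂ} {n δ : ℕ} {a ε r : ℝ}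
    (hp : DifferentiableOn ℂ p unitDisk) (hp0 : p 0 = 1) (hpne : ∀ z ∈ unitDisk, p z ≠ 0)
    (hq : ∀ z ∈ unitDisk, ‖β * (z * deriv p z) / p z ^ n‖ ≤ a + ‖p z‖ ^ δ)
    (ha : 0 ≤ a) (hε : 0 < ε) (hβ : (a + (1 + ε) ^ δ) * (1 + ε) ^ n < ε * ‖β‖)
    (hr : r ∈ Ico 0 1) (hball : ∀ z ∈ ball 0 r, ‖p z - 1‖ ≤ ε) :
    ∀ z ∈ closedBall 0 r, ‖p z - 1‖ < ε := by
  obtain ⟨hr0, hr1⟩ := hr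
  have hβ0 : 0 < ‖β‖ := pos_of_mul_pos_right ((by positivity : (0 : ℝ) ≤ _).trans_lt hβ) hε.le
  rcases hr0.eq_or_lt with rfl | hr0
  · intro z hz
    rw [closedBall_zero, mem_singleton_iff] at hz
    simpa [hz, hp0] using hε
  have hrD : closedBall (0 : ℂ) r ⊆ unitDisk := closedBall_subset_ball hr1
  have hclosed : ∀ z ∈ closedBall (0 : ℂ) r, ‖p z - 1‖ ≤ ε := by
    rw [← closure_ball 0 hr0.ne']
    refine fun z hz => le_on_closure hball ?_ continuousOn_const hz
    rw [closure_ball 0 hr0.ne']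
    exact ((hp.continuousOn.mono hrD).sub continuousOn_const).norm
  have hK : ∀ z ∈ closedBall (0 : ℂ) r, ‖p z‖ ≤ 1 + ε := fun z hz =>
    (norm_le_insert' (p z) 1).trans (by rw [norm_one]; linarith [hclosed z hz])
  have hL : ∀ z ∈ sphere (0 : ℂ) r, ‖z * deriv p z / p z ^ n‖ ≤ (a + (1 + ε) ^ δ) / ‖β‖ := by
    intro z hz
    rw [le_div_iff₀ hβ0, mul_comm, ← norm_mul, ← mul_div_assoc]
    refine (hq z (hrD (sphere_subset_closedBall hz))).trans ?_
    gcongr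
    exact hK z (sphere_subset_closedBall hz)
  intro z hz
  calc ‖p z - 1‖ ≤ (a + (1 + ε) ^ δ) / ‖β‖ * (1 + ε) ^ n := by
        simpa [hp0] using norm_sub_le_of_norm_mul_deriv_div_pow_le isOpen_ball hp hpne hr0 hrD
          hK hL z hz
    _ < ε := by rwa [div_mul_eq_mul_div, div_lt_iff₀ hβ0]

theorem stmt_12_general (n : ℕ) (hn : 0 < n) (δ : ℕ)
    (β : ℂ)
    (hβ : (1 + Real.exp 1 ^ 2) ^ ((3 - (n : ℝ)) / 2) /
          (Real.sqrt 2 * Real.exp 1) ^ (1 - (n : ℝ)) *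
        (Real.sqrt 2 + ω₀ ^ δ) ≤ ‖β‖)
    (p : ℂ → ℂ) (hp : DifferentiableOn ℂ p unitDisk) (hp0 : p 0 = 1)
    (hpne : ∀ z ∈ unitDisk, p z ≠ 0)
    (hsub : Subord (fun z => p z ^ δ + β * (z * deriv p z) / p z ^ n)
        (fun z => (1 + z) ^ ((1 : ℂ) / 2))) :
    Subord p bean := by
  have hq : ∀ z ∈ unitDisk, ‖β * (z * deriv p z) / p z ^ n‖ ≤ √2 + ‖p z‖ ^ δ := by
    intro z hz
    have h := hsub.norm_le (fun w hw => norm_one_add_cpow_half_le (mem_ball_zero_iff.1 hw).le) z hz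
    calc ‖β * (z * deriv p z) / p z ^ n‖
        = ‖(p z ^ δ + β * (z * deriv p z) / p z ^ n) - p z ^ δ‖ := by rw [add_sub_cancel_left]
      _ ≤ √2 + ‖p z‖ ^ δ := (norm_sub_le _ _).trans (by rw [norm_pow]; linarith)
  have hβ' : (√2 + (1 + 1 / 5) ^ δ) * (1 + 1 / 5) ^ n < 1 / 5 * ‖β‖ := by
    simpa only [show (1 : ℝ) + 1 / 5 = 6 / 5 by norm_num] using
      sqrt_two_add_mul_pow_lt_norm_div_five hn hβ
  exact subord_bean_of_norm_sub_one_le hp hp0 <|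
    forall_mem_ball_le_of_closedBall_lt (hp.continuousOn.sub continuousOn_const).norm
      fun r hr => norm_sub_one_lt_of_forall_ball hp hp0 hpne hq (by positivity) (by norm_num) hβ' hr

theorem stmt_12 (n : ℕ) (hn : 0 < n) (δ : ℕ) (hδ : δ = 0 ∨ δ = 1)
    (β : ℂ) (hβ0 : β ≠ 0)
    (hβ : (1 + Real.exp 1 ^ 2) ^ ((3 - (n : ℝ)) / 2) /
          (Real.sqrt 2 * Real.exp 1) ^ (1 - (n : ℝ)) *
        (Real.sqrt 2 + ω₀ ^ δ) ≤ ‖β‖)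
    (p : ℂ → ℂ) (hp : DifferentiableOn ℂ p unitDisk) (hp0 : p 0 = 1)
    (hpne : ∀ z ∈ unitDisk, p z ≠ 0)
    (hsub : Subord (fun z => p z ^ δ + β * (z * deriv p z) / p z ^ n)
        (fun z => (1 + z) ^ ((1 : ℂ) / 2))) :
    Subord p bean :=
  stmt_12_general n hn δ β hβ p hp hp0 hpne hsub
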